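/- Let B be a p × k matrix with orthonormal columns and Σ a symmetric PSD p × p matrix with eigenvalues λ₁ ≥ … ≥ λ_p. Then tr(BᵀΣB) ≤ λ₁ + … + λ_k, with equality when the columns of B are eigenvectors of Σ corresponding to the top k eigenvalues (Ky Fan's maximum principle). -/

import Mathlib

/-!
Writing `Σ = Qᵀ diag(λ) Q` with `Q` orthogonal and `C = Q B`, one gets
`tr(BᵀΣB) = ∑ᵢ λᵢ Pᵢᵢ` for the orthogonal projection `P = C Cᵀ`. Its diagonal entries lie in
`[0, 1]` (as `Pᵢᵢ = ∑ⱼ Pᵢⱼ²`) and add up to `tr P = k`; among such weights the sum `∑ᵢ λᵢ Pᵢᵢ`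
is largest when all the weight sits on the `k` largest eigenvalues.
-/

open Finset Matrix

theorem sum_mul_le_sum_of_weights_mem_Icc {ι : Type*} [Fintype ι] [DecidableEq ι]
    (A : Finset ι) (lam d : ι → ℝ) (hA : ∀ i ∈ A, ∀ j ∉ A, lam j ≤ lam i)
    (hd : ∀ i, d i ∈ Set.Icc 0 1) (hsum : ∑ i, d i = #A) :
    ∑ i, lam i * d i ≤ ∑ i ∈ A, lam i := by
  rcases A.eq_empty_or_nonempty with rfl | hne
  · have hd : ∀ i, d i = 0 := fun i =>
      (sum_eq_zero_iff_of_nonneg fun i _ => (hd i).1).mp (by simpa using hsum) i (mem_univ i)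
    simp [hd]
  set t := A.inf' hne lam
  have hin : ∀ i ∈ A, t ≤ lam i := fun i hi => inf'_le lam hi
  have hout : ∀ j ∉ A, lam j ≤ t := fun j hj => le_inf' hne lam fun i hi => hA i hi j hj
  have hsplit : ∑ i ∈ A, lam i - ∑ i, lam i * d i =
      ∑ i ∈ A, (lam i - t) * (1 - d i) + ∑ i ∈ Aᶜ, (t - lam i) * d i := by
    rw [← sum_add_sum_compl A d] at hsum
    rw [← sum_add_sum_compl A (fun i => lam i * d i)]
    simp only [sub_mul, mul_sub, mul_one, sum_sub_distrib, ← mul_sum, sum_const, nsmul_eq_mul]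
    linear_combination (-t) * hsum
  have hA_nonneg : 0 ≤ ∑ i ∈ A, (lam i - t) * (1 - d i) :=
    sum_nonneg fun i hi => mul_nonneg (sub_nonneg.2 (hin i hi)) (sub_nonneg.2 (hd i).2)
  have hAc_nonneg : 0 ≤ ∑ i ∈ Aᶜ, (t - lam i) * d i :=
    sum_nonneg fun i hi => mul_nonneg (sub_nonneg.2 (hout i (mem_compl.1 hi))) (hd i).1
  linarith

theorem filter_val_lt_eq_map_castLE {p k : ℕ} (hk : k ≤ p) :
    univ.filter (fun m : Fin p => (m : ℕ) < k) = univ.map (Fin.castLEEmb hk) := by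
  ext m
  simp only [mem_filter, mem_univ, true_and, mem_map, Fin.castLEEmb_apply]
  exact ⟨fun h => ⟨⟨m, h⟩, rfl⟩, by rintro ⟨j, rfl⟩; exact j.isLt⟩

namespace Matrix

variable {m n : Type*} [Fintype m] [Fintype n]

theorem diag_eq_sum_sq_of_isSymm_of_isIdempotentElem {P : Matrix n n ℝ} (hsymm : P.IsSymm)
    (hidem : IsIdempotentElem P) (i : n) : P i i = ∑ j, P i j ^ 2 := by
  conv_lhs => rw [← hidem.eq, mul_apply]
  refine sum_congr rfl fun j _ => ?_
  rw [← hsymm.apply i j, sq]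

theorem diag_mem_Icc_of_isSymm_of_isIdempotentElem {P : Matrix n n ℝ} (hsymm : P.IsSymm)
    (hidem : IsIdempotentElem P) (i : n) : P i i ∈ Set.Icc 0 1 := by
  have hdiag := diag_eq_sum_sq_of_isSymm_of_isIdempotentElem hsymm hidem i
  have hnonneg : 0 ≤ P i i := hdiag ▸ sum_nonneg fun j _ => sq_nonneg (P i j)
  have hsq : P i i ^ 2 ≤ P i i :=
    hdiag ▸ single_le_sum (f := fun j => P i j ^ 2) (fun j _ => sq_nonneg _) (mem_univ i)
  exact ⟨hnonneg, by nlinarith⟩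

theorem isIdempotentElem_mul_transpose_self {R : Type*} [CommSemiring R] [DecidableEq n]
    {C : Matrix m n R} (hC : Cᵀ * C = 1) :
    IsIdempotentElem (C * Cᵀ) := by
  rw [IsIdempotentElem, Matrix.mul_assoc, ← Matrix.mul_assoc Cᵀ, hC, Matrix.one_mul]

theorem trace_mul_transpose_self {R : Type*} [CommSemiring R] [DecidableEq n]
    {C : Matrix m n R} (hC : Cᵀ * C = 1) :
    (C * Cᵀ).trace = Fintype.card n := by
  rw [trace_mul_comm, hC, trace_one]

theorem trace_transpose_mul_diagonal_mul [DecidableEq m] (C : Matrix m n ℝ) (lam : m → ℝ) :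
    (Cᵀ * diagonal lam * C).trace = ∑ i, lam i * (C * Cᵀ) i i := by
  rw [Matrix.mul_assoc, trace_mul_comm, Matrix.mul_assoc, trace]
  simp only [diag_apply, diagonal_mul]

theorem trace_transpose_mul_diagonal_mul_le {p k : ℕ} (hk : k ≤ p) {lam : Fin p → ℝ}
    (hlam : Antitone lam) {C : Matrix (Fin p) (Fin k) ℝ} (hC : Cᵀ * C = 1) :
    (Cᵀ * diagonal lam * C).trace ≤ ∑ m ∈ univ.filter (fun m : Fin p => (m : ℕ) < k), lam m := by
  have hsymm : (C * Cᵀ).IsSymm := by rw [IsSymm, transpose_mul, transpose_transpose]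
  have hdiag := diag_mem_Icc_of_isSymm_of_isIdempotentElem hsymm
    (isIdempotentElem_mul_transpose_self hC)
  rw [trace_transpose_mul_diagonal_mul]
  refine sum_mul_le_sum_of_weights_mem_Icc _ lam _ ?_ hdiag ?_
  · intro i hi j hj
    simp only [mem_filter, mem_univ, true_and, not_lt] at hi hj
    exact hlam (Fin.le_def.2 (by omega))
  · have := trace_mul_transpose_self hC
    rw [trace, Fintype.card_fin] at this
    rw [Fin.card_filter_val_lt, min_eq_right hk]
    exact this

theorem transpose_mul_self_of_orthonormal_rows [DecidableEq n] {β : n → n → ℝ}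
    (horth : ∀ i j, β i ⬝ᵥ β j = if i = j then 1 else 0) : (of β)ᵀ * of β = 1 := by
  refine mul_eq_one_comm.mp (ext fun i j => ?_)
  rw [mul_apply', one_apply, ← horth]
  rfl

theorem eq_transpose_mul_diagonal_mul_of_orthonormal_eigenvectors [DecidableEq n]
    {S : Matrix n n ℝ} {β : n → n → ℝ} {lam : n → ℝ}
    (horth : ∀ i j, β i ⬝ᵥ β j = if i = j then 1 else 0) (heig : ∀ i, S *ᵥ β i = lam i • β i) :
    S = (of β)ᵀ * diagonal lam * of β := by
  have hSQ : S * (of β)ᵀ = (of β)ᵀ * diagonal lam := by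
    ext a j
    rw [mul_diagonal, mul_apply', transpose_apply, of_apply, mul_comm, ← smul_eq_mul,
      ← Pi.smul_apply, ← heig]
    rfl
  calc S = S * ((of β)ᵀ * of β) := by
        rw [transpose_mul_self_of_orthonormal_rows horth, Matrix.mul_one]
    _ = (of β)ᵀ * diagonal lam * of β := by rw [← Matrix.mul_assoc, hSQ]

theorem trace_transpose_mul_mul {R : Type*} [NonUnitalCommSemiring R] (B : Matrix m n R)
    (S : Matrix m m R) :
    (Bᵀ * S * B).trace = ∑ j, Bᵀ j ⬝ᵥ S *ᵥ Bᵀ j := by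
  simp only [trace, diag_apply, Matrix.mul_assoc, mul_apply']
  rfl

end Matrix

theorem stmt_18_general {p k : ℕ} (hk : k ≤ p)
    (S : Matrix (Fin p) (Fin p) ℝ)
    (β : Fin p → Fin p → ℝ) (lam : Fin p → ℝ)
    (horth : ∀ i j, dotProduct (β i) (β j) = if i = j then (1 : ℝ) else 0)
    (heig : ∀ i, S.mulVec (β i) = lam i • β i)
    (hmono : Antitone lam) :
    (∀ B : Matrix (Fin p) (Fin k) ℝ, B.transpose * B = 1 →
        (B.transpose * S * B).trace ≤
          ∑ m ∈ Finset.univ.filter (fun m : Fin p => (m : ℕ) < k), lam m) ∧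
    ((Matrix.of fun i (j : Fin k) => β (Fin.castLE hk j) i).transpose * S *
        (Matrix.of fun i (j : Fin k) => β (Fin.castLE hk j) i)).trace =
      ∑ m ∈ Finset.univ.filter (fun m : Fin p => (m : ℕ) < k), lam m := by
  have hS := eq_transpose_mul_diagonal_mul_of_orthonormal_eigenvectors horth heig
  refine ⟨fun B hB => ?_, ?_⟩
  · have hC : (of β * B)ᵀ * (of β * B) = 1 := by
      rw [transpose_mul, Matrix.mul_assoc, ← Matrix.mul_assoc (of β)ᵀ,
        transpose_mul_self_of_orthonormal_rows horth, Matrix.one_mul, hB]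
    have := trace_transpose_mul_diagonal_mul_le hk hmono hC
    rwa [transpose_mul, ← Matrix.mul_assoc, Matrix.mul_assoc _ (of β)ᵀ, Matrix.mul_assoc Bᵀ,
      ← hS] at this
  · have hdiag (j : Fin p) : β j ⬝ᵥ S *ᵥ β j = lam j := by
      rw [heig, dotProduct_smul, horth, if_pos rfl, smul_eq_mul, mul_one]
    rw [trace_transpose_mul_mul, filter_val_lt_eq_map_castLE hk, sum_map]
    exact sum_congr rfl fun j _ => hdiag _

/-- Ky Fan's maximum principle: for `B` a `p × k` matrix with orthonormal columns and `Σ`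
symmetric PSD with eigenvalues `λ₁ ≥ … ≥ λ_p` (orthonormal eigenvectors `β`),
`tr(BᵀΣB) ≤ λ₁ + … + λ_k`, with equality when the columns of `B` are the top-`k`
eigenvectors. -/
theorem stmt_18 {p k : ℕ} (hk : k ≤ p)
    (S : Matrix (Fin p) (Fin p) ℝ) (hsymm : S.IsSymm) (hpsd : S.PosSemidef)
    (β : Fin p → Fin p → ℝ) (lam : Fin p → ℝ)
    (horth : ∀ i j, dotProduct (β i) (β j) = if i = j then (1 : ℝ) else 0)
    (heig : ∀ i, S.mulVec (β i) = lam i • β i)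
    (hmono : Antitone lam) :
    (∀ B : Matrix (Fin p) (Fin k) ℝ, B.transpose * B = 1 →
        (B.transpose * S * B).trace ≤
          ∑ m ∈ Finset.univ.filter (fun m : Fin p => (m : ℕ) < k), lam m) ∧
    ((Matrix.of fun i (j : Fin k) => β (Fin.castLE hk j) i).transpose * S *
        (Matrix.of fun i (j : Fin k) => β (Fin.castLE hk j) i)).trace =
      ∑ m ∈ Finset.univ.filter (fun m : Fin p => (m : ℕ) < k), lam m :=
  stmt_18_general hk S β lam horth heig hmono
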